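/- arXiv:2404.16716 — 2 statements merged into one kernel-verified Lean document; each statement's English description precedes it below -/
import Mathlib

section
/- Let n₀, e, q ≥ 1 be integers such that every prime dividing n₀ also divides q - 1. Let n₀' = n₀ if n₀ is odd and n₀' = n₀/2 if n₀ is even. Then ∑_{i=0}^{n₀e-1} (n₀e - 1 - i) q^i is divisible by n₀'. -/
private lemma two_pow_aux : ∀ v : ℕ, 2 ≤ v → v + 2 ≤ 2 ^ v := by
  intro v hv
  induction v with
  | zero => omega
  | succ n ih =>
    rcases Nat.lt_or_ge n 2 with hn | hn
    · interval_cases n <;> simp <;> omega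
    · have := ih hn
      have h2 : 2 ^ n + 2 ^ n = 2 ^ (n+1) := by ring
      omega

/-- key divisibility of each binomial term -/
private lemma key_dvd (n₀ N q j : ℕ) (hn₀ : 1 ≤ n₀) (hN : n₀ ∣ N) (hN0 : 0 < N)
    (h : ∀ p : ℕ, p.Prime → p ∣ n₀ → p ∣ q - 1) (hj : 2 ≤ j) :
    (if Odd n₀ then n₀ else n₀ / 2) ∣ N.choose j * (q - 1) ^ (j - 2) := by
  set m := if Odd n₀ then n₀ else n₀ / 2 with hm
  have hmdvd : m ∣ n₀ := by
    rw [hm]; split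
    · exact dvd_rfl
    · exact Nat.div_dvd_of_dvd (Nat.not_odd_iff_even.mp (by assumption)).two_dvd
  have hmpos : 0 < m := by
    rw [hm]; split
    · exact hn₀
    · have h2 : 2 ∣ n₀ := (Nat.not_odd_iff_even.mp (by assumption)).two_dvd
      exact Nat.div_pos (Nat.le_of_dvd hn₀ h2) (by norm_num)
  by_cases hzero : N.choose j * (q - 1) ^ (j - 2) = 0
  · rw [hzero]; exact dvd_zero m
  have hC : N.choose j ≠ 0 := fun hc => hzero (by rw [hc, zero_mul])
  have hd : (q - 1) ^ (j - 2) ≠ 0 := fun hc => hzero (by rw [hc, mul_zero])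
  have hjN : j ≤ N := by
    by_contra hlt
    exact hC (Nat.choose_eq_zero_of_lt (by omega))
  rw [← Nat.factorization_le_iff_dvd hmpos.ne' hzero]
  rw [Finsupp.le_def]
  intro p
  by_cases hp : p.Prime
  swap
  · simp [Nat.factorization_eq_zero_of_not_prime _ hp]
  by_cases hpm : p ∣ m
  swap
  · simp [Nat.factorization_eq_zero_of_not_dvd hpm]
  -- now p prime, p ∣ m
  rw [Nat.factorization_mul hC hd, Nat.factorization_pow]
  simp only [Finsupp.coe_add, Finsupp.coe_smul, Pi.add_apply, Pi.smul_apply, smul_eq_mul]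
  have hmn : m.factorization p ≤ n₀.factorization p :=
    (Nat.factorization_le_iff_dvd hmpos.ne' (by omega)).mpr hmdvd p
  have hnN : n₀.factorization p ≤ N.factorization p :=
    (Nat.factorization_le_iff_dvd (by omega) hN0.ne').mpr hN p
  -- identity : N * choose (N-1) (j-1) = choose N j * j
  have hid : N * Nat.choose (N - 1) (j - 1) = N.choose j * j := by
    have hthis := Nat.add_one_mul_choose_eq (N - 1) (j - 1)
    have e1 : N - 1 + 1 = N := by omega
    have e2 : j - 1 + 1 = j := by omega
    simp only [Nat.succ_eq_add_one, e1, e2] at hthis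
    exact hthis
  have hC' : Nat.choose (N - 1) (j - 1) ≠ 0 :=
    Nat.choose_pos (by omega : j - 1 ≤ N - 1) |>.ne'
  have hkey : N.factorization p ≤ (N.choose j).factorization p + j.factorization p := by
    have := congrArg (fun t => t.factorization p) hid
    rw [Nat.factorization_mul hN0.ne' hC', Nat.factorization_mul hC (by omega : j ≠ 0)] at this
    simp only [Finsupp.coe_add, Pi.add_apply] at this
    omega
  rcases Nat.lt_or_ge j 3 with hj2 | hj3
  · -- j = 2
    have hj2' : j = 2 := by omega
    subst hj2'
    simp only [Nat.sub_self, pow_zero, Nat.factorization_one, Finsupp.coe_zero, Pi.zero_apply,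
      mul_zero, add_zero]
    by_cases hp2 : p = 2
    · subst hp2
      have hodd : ¬ Odd n₀ := by
        intro ho
        rw [hm, if_pos ho] at hpm
        exact (Nat.not_even_iff_odd.mpr ho) (even_iff_two_dvd.mpr hpm)
      have hm2 : m * 2 = n₀ := by
        rw [hm, if_neg hodd]
        exact Nat.div_mul_cancel (Nat.not_odd_iff_even.mp hodd).two_dvd
      have : n₀.factorization 2 = m.factorization 2 + 1 := by
        rw [← hm2, Nat.factorization_mul hmpos.ne' (by norm_num)]
        simp [Nat.Prime.factorization Nat.prime_two]
      have h2f : (2 : ℕ).factorization 2 = 1 := by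
        simp [Nat.Prime.factorization Nat.prime_two]
      rw [h2f] at hkey
      omega
    · have h2f : (2 : ℕ).factorization p = 0 := by
        rw [Nat.Prime.factorization Nat.prime_two]
        simp [Finsupp.single_apply, hp2, Ne.symm hp2]
      rw [h2f] at hkey
      omega
  · -- j ≥ 3
    have hq1 : q - 1 ≠ 0 := by
      intro h0
      rw [h0, zero_pow (by omega : j - 2 ≠ 0)] at hd
      exact hd rfl
    have hpd : p ∣ q - 1 := h p hp (hpm.trans hmdvd)
    have hvd : 1 ≤ (q - 1).factorization p := Nat.Prime.factorization_pos_of_dvd hp hq1 hpd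
    have hvj : j.factorization p ≤ j - 2 := by
      have hdvdj : p ^ j.factorization p ∣ j := Nat.ordProj_dvd j p
      have hle : p ^ j.factorization p ≤ j := Nat.le_of_dvd (by omega) hdvdj
      have h2le : 2 ^ j.factorization p ≤ p ^ j.factorization p :=
        Nat.pow_le_pow_left hp.two_le _
      rcases Nat.lt_or_ge (j.factorization p) 2 with hv | hv
      · omega
      · have := two_pow_aux _ hv
        omega
    have : j - 2 ≤ (j - 2) * (q - 1).factorization p := Nat.le_mul_of_pos_right _ (by omega)
    omega

private lemma sum_identity (q : ℤ) (N : ℕ) :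
    (q - 1) ^ 2 * ∑ i ∈ Finset.range N, ((N - 1 - i : ℕ) : ℤ) * q ^ i
      = q ^ N - 1 - N * (q - 1) := by
  induction N with
  | zero => simp
  | succ n ih =>
    have h1 : ∑ i ∈ Finset.range (n + 1), ((n + 1 - 1 - i : ℕ) : ℤ) * q ^ i
        = (∑ i ∈ Finset.range n, ((n - 1 - i : ℕ) : ℤ) * q ^ i)
          + ∑ i ∈ Finset.range n, q ^ i := by
      rw [Finset.sum_range_succ]
      have hz : ((n + 1 - 1 - n : ℕ) : ℤ) = 0 := by simp
      rw [hz, zero_mul, add_zero, ← Finset.sum_add_distrib]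
      refine Finset.sum_congr rfl fun i hi => ?_
      have hi' : i < n := Finset.mem_range.mp hi
      have he : (n + 1 - 1 - i : ℕ) = (n - 1 - i) + 1 := by omega
      rw [he]
      push_cast
      ring
    rw [h1, mul_add, ih]
    have h2 : (∑ i ∈ Finset.range n, q ^ i) * (q - 1) = q ^ n - 1 := geom_sum_mul q n
    push_cast
    linear_combination (q - 1) * h2

/-- Let `n₀, e, q ≥ 1` be integers such that every prime dividing `n₀` also divides
`q - 1`. Let `n₀' = n₀` if `n₀` is odd and `n₀' = n₀/2` if `n₀` is even. Then
`∑_{i=0}^{n₀e-1} (n₀e - 1 - i) q^i` is divisible by `n₀'`. -/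
theorem stmt_1 (n₀ e q : ℕ) (hn₀ : 1 ≤ n₀) (he : 1 ≤ e) (hq : 1 ≤ q)
    (h : ∀ p : ℕ, p.Prime → p ∣ n₀ → p ∣ q - 1) :
    (if Odd n₀ then n₀ else n₀ / 2) ∣
      ∑ i ∈ Finset.range (n₀ * e), (n₀ * e - 1 - i) * q ^ i := by
  set m := if Odd n₀ then n₀ else n₀ / 2 with hm
  set N := n₀ * e with hNdef
  have hN0 : 0 < N := Nat.mul_pos hn₀ he
  have hNdvd : n₀ ∣ N := Dvd.intro e rfl
  by_cases hq1 : q = 1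
  · subst hq1
    simp only [one_pow, mul_one]
    have hsum : ∑ i ∈ Finset.range N, (N - 1 - i) = N.choose 2 := by
      rw [Finset.sum_range_reflect (fun i => i) N]
      rw [Nat.choose_two_right, Finset.sum_range_id]
    rw [hsum]
    have := key_dvd n₀ N 1 2 hn₀ hNdvd hN0 h (le_refl 2)
    simpa using this
  · have hq2 : 2 ≤ q := by omega
    set d : ℕ := q - 1 with hd
    have hd1 : 1 ≤ d := by omega
    have hqd : (q : ℤ) - 1 = (d : ℤ) := by push_cast [hd]; omega
    -- divisibility of q^N - 1 - N*(q-1) by m * d^2 in ℤ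
    have hbig : ((m : ℤ) * (d : ℤ) ^ 2) ∣ ((q : ℤ) ^ N - 1 - N * ((q : ℤ) - 1)) := by
      have hbinom : ((q : ℤ)) ^ N
          = ∑ k ∈ Finset.range (N + 1), (d : ℤ) ^ k * 1 ^ (N - k) * N.choose k := by
        have : (q : ℤ) = (d : ℤ) + 1 := by omega
        rw [this, add_pow]
      have hsplit : ∑ k ∈ Finset.range (N + 1), (d : ℤ) ^ k * 1 ^ (N - k) * N.choose k
          = (∑ k ∈ Finset.range 2, (d : ℤ) ^ k * 1 ^ (N - k) * N.choose k)
            + ∑ k ∈ Finset.Ico 2 (N + 1), (d : ℤ) ^ k * 1 ^ (N - k) * N.choose k := by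
        simp only [Finset.range_eq_Ico]
        exact (Finset.sum_Ico_consecutive _ (by omega : (0:ℕ) ≤ 2) (by omega : 2 ≤ N + 1)).symm
      have hfirst : (∑ k ∈ Finset.range 2, (d : ℤ) ^ k * 1 ^ (N - k) * N.choose k)
          = 1 + N * (d : ℤ) := by
        rw [Finset.sum_range_succ, Finset.sum_range_one]
        simp [Nat.choose_one_right]
        ring
      have heq : (q : ℤ) ^ N - 1 - N * ((q : ℤ) - 1)
          = ∑ k ∈ Finset.Ico 2 (N + 1), (d : ℤ) ^ k * 1 ^ (N - k) * N.choose k := by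
        rw [hbinom, hsplit, hfirst, hqd]; ring
      rw [heq]
      refine Finset.dvd_sum fun k hk => ?_
      have hk2 : 2 ≤ k := (Finset.mem_Ico.mp hk).1
      have hkey := key_dvd n₀ N q k hn₀ hNdvd hN0 h hk2
      rw [← hm] at hkey
      have hcast : ((m : ℤ)) ∣ (N.choose k : ℤ) * (d : ℤ) ^ (k - 2) := by
        exact_mod_cast Int.natCast_dvd_natCast.mpr hkey
      have hpow : (d : ℤ) ^ k = (d : ℤ) ^ (k - 2) * (d : ℤ) ^ 2 := by
        rw [← pow_add]; congr 1; omega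
      calc (m : ℤ) * (d : ℤ) ^ 2 ∣ ((N.choose k : ℤ) * (d : ℤ) ^ (k - 2)) * (d : ℤ) ^ 2 :=
            mul_dvd_mul hcast dvd_rfl
        _ = (d : ℤ) ^ k * 1 ^ (N - k) * N.choose k := by rw [hpow]; ring
    -- combine
    have hident := sum_identity (q : ℤ) N
    rw [hqd] at hident
    have hdvd2 : ((d : ℤ) ^ 2 * (m : ℤ)) ∣ ((d : ℤ) ^ 2 * ∑ i ∈ Finset.range N, ((N - 1 - i : ℕ) : ℤ) * (q : ℤ) ^ i) := by
      rw [hident]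
      rw [hqd] at hbig
      rwa [mul_comm ((d : ℤ) ^ 2) (m : ℤ)]
    have hdne : ((d : ℤ) ^ 2) ≠ 0 := pow_ne_zero _ (by exact_mod_cast (by omega : d ≠ 0))
    have hfinal : (m : ℤ) ∣ ∑ i ∈ Finset.range N, ((N - 1 - i : ℕ) : ℤ) * (q : ℤ) ^ i :=
      (mul_dvd_mul_iff_left hdne).mp hdvd2
    have : (m : ℤ) ∣ ((∑ i ∈ Finset.range N, (N - 1 - i) * q ^ i : ℕ) : ℤ) := by
      push_cast
      exact hfinal
    exact_mod_cast this
end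

section
/- Let R be a DVR with fraction field K and let X be a flat R-scheme of finite presentation whose coordinate ring (assume X affine) is a free R-module. Then the Zariski closure in X of every irreducible component of the generic fiber X_K meets the special fiber X_k. -/
open TensorProduct

section Helpers

variable (R : Type) [CommRing R] [IsDomain R]
  (A : Type) [CommRing A] [Algebra R A]

lemma helper_denom (t : FractionRing R ⊗[R] A) :
    ∃ r : R, r ≠ 0 ∧ ∃ b : A, r • t = (1 : FractionRing R) ⊗ₜ[R] b := by
  induction t with
  | zero => exact ⟨1, one_ne_zero, 0, by simp⟩
  | tmul k a =>
      obtain ⟨⟨m, d⟩, hd⟩ := IsLocalization.surj (nonZeroDivisors R) k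
      refine ⟨d, nonZeroDivisors.ne_zero d.2, m • a, ?_⟩
      have h1 : (d : R) • k = algebraMap R (FractionRing R) m := by
        rw [Algebra.smul_def, mul_comm]; exact hd
      rw [TensorProduct.smul_tmul', h1, Algebra.algebraMap_eq_smul_one,
        TensorProduct.smul_tmul]
  | add t₁ t₂ h₁ h₂ =>
      obtain ⟨r₁, hr₁, b₁, hb₁⟩ := h₁
      obtain ⟨r₂, hr₂, b₂, hb₂⟩ := h₂
      refine ⟨r₁ * r₂, mul_ne_zero hr₁ hr₂, r₂ • b₁ + r₁ • b₂, ?_⟩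
      rw [smul_add, TensorProduct.tmul_add]
      rw [show (r₁ * r₂) • t₁ = r₂ • (r₁ • t₁) by rw [smul_smul, mul_comm],
        show (r₁ * r₂) • t₂ = r₁ • (r₂ • t₂) by rw [smul_smul], hb₁, hb₂,
        TensorProduct.smul_tmul', TensorProduct.smul_tmul',
        TensorProduct.smul_tmul, TensorProduct.smul_tmul]

lemma helper_inj [Module.Free R A] (b : A)
    (h : (1 : FractionRing R) ⊗ₜ[R] b = 0) : b = 0 := by
  let f : A →ₗ[R] FractionRing R ⊗[R] A := TensorProduct.mk R (FractionRing R) A 1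
  haveI : IsLocalizedModule (nonZeroDivisors R) f :=
    (isLocalizedModule_iff_isBaseChange (nonZeroDivisors R) (FractionRing R) f).mpr
      (TensorProduct.isBaseChange R A (FractionRing R))
  obtain ⟨s, hs⟩ := (IsLocalizedModule.eq_zero_iff (nonZeroDivisors R) f).mp h
  rcases smul_eq_zero.mp hs with h' | h'
  · exact absurd h' (nonZeroDivisors.ne_zero s.2)
  · exact h'

lemma helper_dvr [IsDiscreteValuationRing R] {ϖ : R} (hϖ : Irreducible ϖ)
    (c : R) (hc : ∀ n : ℕ, ∃ d : R, c = ϖ ^ n * d) : c = 0 := by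
  by_contra h0
  obtain ⟨n, u, hu⟩ := IsDiscreteValuationRing.eq_unit_mul_pow_irreducible h0 hϖ
  obtain ⟨d, hd⟩ := hc (n + 1)
  rw [hu, pow_succ] at hd
  have hud : (u : R) = ϖ * d := by
    have hϖn : (ϖ : R) ^ n ≠ 0 := pow_ne_zero n hϖ.ne_zero
    apply mul_left_cancel₀ hϖn
    calc ϖ ^ n * (u : R) = (u : R) * ϖ ^ n := mul_comm _ _
      _ = ϖ ^ n * ϖ * d := hd
      _ = ϖ ^ n * (ϖ * d) := by ring
  exact hϖ.not_isUnit (isUnit_of_mul_isUnit_left (hud ▸ u.isUnit))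

end Helpers

/-- Let `R` be a DVR with fraction field `K` and let `X = Spec A` be a flat affine
`R`-scheme of finite presentation whose coordinate ring `A` is a free `R`-module.
Then the Zariski closure in `X` of every irreducible component of the generic fiber
`X_K` meets the special fiber `X_k`. -/
theorem stmt_6 (R : Type) [CommRing R] [IsDomain R] [IsDiscreteValuationRing R]
    (A : Type) [CommRing A] [Algebra R A] [Module.Free R A]
    (hfp : Algebra.FinitePresentation R A)
    (Z : Set (PrimeSpectrum (FractionRing R ⊗[R] A)))
    (hZ : Z ∈ irreducibleComponents (PrimeSpectrum (FractionRing R ⊗[R] A))) :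
    (closure (PrimeSpectrum.comap
        (Algebra.TensorProduct.includeRight : A →ₐ[R] FractionRing R ⊗[R] A).toRingHom '' Z)
      ∩ PrimeSpectrum.zeroLocus
          ((Ideal.map (algebraMap R A) (IsLocalRing.maximalIdeal R) : Ideal A) : Set A)).Nonempty := by
  classical
  set K := FractionRing R
  set S := K ⊗[R] A with hSdef
  set f : A →+* S :=
    (Algebra.TensorProduct.includeRight : A →ₐ[R] S).toRingHom with hfdef
  have hfapp : ∀ b : A, f b = (1 : K) ⊗ₜ[R] b := fun b => rfl
  -- the generic point of Z is a minimal prime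
  have hZc : IsClosed Z := isClosed_of_mem_irreducibleComponents Z hZ
  have hmin : PrimeSpectrum.vanishingIdeal Z ∈ minimalPrimes S := by
    rw [PrimeSpectrum.vanishingIdeal_mem_minimalPrimes, hZc.closure_eq]; exact hZ
  haveI hqprime : (PrimeSpectrum.vanishingIdeal Z).IsPrime := hmin.1.1
  set q : PrimeSpectrum S := ⟨PrimeSpectrum.vanishingIdeal Z, hqprime⟩ with hqdef
  have hqZ : q ∈ Z := by
    have hq1 : q ∈ PrimeSpectrum.zeroLocus
        ((PrimeSpectrum.vanishingIdeal Z : Ideal S) : Set S) :=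
      (PrimeSpectrum.mem_zeroLocus _ _).mpr (le_refl _)
    rwa [PrimeSpectrum.zeroLocus_vanishingIdeal_eq_closure, hZc.closure_eq] at hq1
  set p : PrimeSpectrum A := PrimeSpectrum.comap f q with hpdef
  -- a uniformizer
  obtain ⟨ϖ, hϖ⟩ := IsDiscreteValuationRing.exists_irreducible R
  have hmax : IsLocalRing.maximalIdeal R = Ideal.span {ϖ} :=
    (IsDiscreteValuationRing.irreducible_iff_uniformizer ϖ).mp hϖ
  -- main claim: the relevant ideal is proper
  have hne : p.asIdeal ⊔ Ideal.map (algebraMap R A) (IsLocalRing.maximalIdeal R) ≠ ⊤ := by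
    intro htop
    rw [Ideal.eq_top_iff_one] at htop
    obtain ⟨x, hx, y, hy, hxy⟩ := Submodule.mem_sup.mp htop
    rw [hmax, Ideal.map_span, Set.image_singleton, Ideal.mem_span_singleton'] at hy
    obtain ⟨a, ha⟩ := hy
    have h1x : a * algebraMap R A ϖ = 1 - x := ha.trans (eq_sub_of_add_eq' hxy)
    -- x ∈ q after mapping
    have hfx : f x ∈ q.asIdeal := hx
    -- f x is nilpotent in the localization at q
    have hnilp : IsNilpotent
        (algebraMap S (Localization q.asIdeal.primeCompl) (f x)) := by
      have hrad := IsLocalization.AtPrime.radical_map_of_mem_minimalPrimes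
        (A := Localization q.asIdeal.primeCompl) q.asIdeal ⊥ hmin
      rw [Ideal.map_bot] at hrad
      rw [← mem_nilradical]
      show _ ∈ (⊥ : Ideal (Localization q.asIdeal.primeCompl)).radical
      rw [hrad, Localization.AtPrime.map_eq_maximalIdeal]
      exact (IsLocalization.AtPrime.to_map_mem_maximal_iff
        (Localization q.asIdeal.primeCompl) q.asIdeal (f x)).mpr hfx
    obtain ⟨n, hn⟩ := hnilp
    rw [← map_pow] at hn
    obtain ⟨s, hs⟩ := (IsLocalization.map_eq_zero_iff q.asIdeal.primeCompl _ _).mp hn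
    have hs0 : (s : S) ≠ 0 := fun h => s.2 (h ▸ q.asIdeal.zero_mem)
    -- clear denominators
    obtain ⟨r, hr0, b, hrb⟩ := helper_denom R A (s : S)
    have hb0 : b ≠ 0 := by
      intro hb
      apply hs0
      have hunit : IsUnit (algebraMap R S r) := by
        have h1 : IsUnit (algebraMap R K r) :=
          IsLocalization.map_units K (⟨r, mem_nonZeroDivisors_of_ne_zero hr0⟩ :
            nonZeroDivisors R)
        rw [IsScalarTower.algebraMap_apply R K S r]
        exact h1.map (algebraMap K S)
      have hz : algebraMap R S r * (s : S) = 0 := by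
        rw [← Algebra.smul_def, hrb, hb]
        exact (hfapp 0) ▸ (map_zero f)
      exact (hunit.mul_right_eq_zero).mp hz
    -- b * x ^ n = 0
    have hbx : b * x ^ n = 0 := by
      apply helper_inj R A
      have h1 : (1 : K) ⊗ₜ[R] (b * x ^ n) = f (b * x ^ n) := (hfapp _).symm
      rw [h1, map_mul, map_pow, hfapp b, ← hrb, smul_mul_assoc, hs, smul_zero]
    -- b is divisible by every power of ϖ
    have hdiv : ∀ m : ℕ, ∃ e : A, b = ϖ ^ m • e ∧ e * x ^ n = 0 := by
      intro m
      induction m with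
      | zero => exact ⟨b, by simp, hbx⟩
      | succ m ih =>
          obtain ⟨e, he, hex⟩ := ih
          set g : A := ∑ i ∈ Finset.range n, x ^ i with hgdef
          have hg : g * (x - 1) = x ^ n - 1 := geom_sum_mul x n
          have key : e = algebraMap R A ϖ * (e * g * a) := by
            linear_combination e * hg + hex - (e * g) * h1x
          refine ⟨e * g * a, ?_, by linear_combination g * a * hex⟩
          rw [he, pow_succ, mul_smul]
          congr 1
          rw [Algebra.smul_def]
          exact key
    -- conclude b = 0 via a basis, contradiction
    obtain ⟨ι, 𝓑⟩ := Module.Free.exists_basis (R := R) (M := A)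
    have hrepr : 𝓑.repr b ≠ 0 := fun h => hb0 (𝓑.repr.map_eq_zero_iff.mp h)
    obtain ⟨i, hi⟩ := Finsupp.ne_iff.mp hrepr
    apply hi
    apply helper_dvr R hϖ
    intro m
    obtain ⟨e, he, -⟩ := hdiv m
    refine ⟨𝓑.repr e i, ?_⟩
    rw [he, map_smul, Finsupp.smul_apply, smul_eq_mul]
  -- choose a maximal ideal containing the sum
  obtain ⟨M, hMmax, hMle⟩ := Ideal.exists_le_maximal _ hne
  refine ⟨⟨M, hMmax.isPrime⟩, ?_, ?_⟩
  · rw [← PrimeSpectrum.zeroLocus_vanishingIdeal_eq_closure]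
    rw [PrimeSpectrum.mem_zeroLocus]
    have h1 : PrimeSpectrum.vanishingIdeal (PrimeSpectrum.comap f '' Z)
        ≤ PrimeSpectrum.vanishingIdeal {p} :=
      PrimeSpectrum.vanishingIdeal_anti_mono
        (Set.singleton_subset_iff.mpr (Set.mem_image_of_mem _ hqZ))
    rw [PrimeSpectrum.vanishingIdeal_singleton] at h1
    intro z hz
    exact hMle (Ideal.mem_sup_left (h1 hz))
  · rw [PrimeSpectrum.mem_zeroLocus]
    intro z hz
    exact hMle (Ideal.mem_sup_right hz)
end
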